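/- Let R be an equivalence relation on S^LMC such that the quotient space S^LMC/R is Hausdorff, and let Γ = {⋂[p̃]_R : p̃ ∈ S^LMC}. Then, with the τ* quotient topology on Γ, the map φ : S^LMC/R → Γ defined by φ([p̃]) = ⋂[p̃] is a homeomorphism; in particular Γ is homeomorphic to S^LMC/R. -/

import Mathlib

open Set Topology WeakDual BoundedContinuousFunction

noncomputable section

variable (S : Type*) [TopologicalSpace S] [T2Space S] [Semigroup S]

/-- Left translation `λ_s`, as a continuous map, given continuity of left translations. -/
def lamC (hl : ∀ s : S, Continuous (fun t => s * t)) (s : S) : C(S, S) :=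
  ⟨fun t => s * t, hl s⟩

/-- An m-admissible subalgebra of `CB(S) = S →ᵇ ℂ`. -/
structure MAdmissible (hl : ∀ s : S, Continuous (fun t => s * t)) : Type _ where
  carrier : StarSubalgebra ℂ (S →ᵇ ℂ)
  isClosed' : IsClosed (carrier : Set (S →ᵇ ℂ))
  leftInvariant : ∀ (s : S), ∀ f ∈ carrier, f.compContinuous (lamC S hl s) ∈ carrier
  mAdmissible : ∀ (μ : characterSpace ℂ carrier) (f : S →ᵇ ℂ) (hf : f ∈ carrier),
    ∃ g ∈ carrier, ∀ s : S,
      g s = μ ⟨f.compContinuous (lamC S hl s), leftInvariant s f hf⟩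

variable {hl : ∀ s : S, Continuous (fun t => s * t)}

/-- The spectrum `S^F` of an m-admissible subalgebra. -/
abbrev specF (F : MAdmissible S hl) : Type _ := characterSpace ℂ F.carrier

/-- Evaluation at a point, as an algebra homomorphism on `F`. -/
def evalHom (F : MAdmissible S hl) (s : S) : F.carrier →ₐ[ℂ] ℂ where
  toFun f := (f : S →ᵇ ℂ) s
  map_one' := rfl
  map_mul' _ _ := rfl
  map_zero' := rfl
  map_add' _ _ := rfl
  commutes' _ := rfl

/-- The evaluation map `ε : S → S^F`. -/
def epsF (F : MAdmissible S hl) (s : S) : specF S F :=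
  haveI : CompleteSpace F.carrier := F.isClosed'.completeSpace_coe
  CharacterSpace.equivAlgHom.symm (evalHom S F s)

variable (F : MAdmissible S hl)

/-- `Z(F)`: the collection of zero sets of members of `F`. -/
def ZSet : Set (Set S) := {A | ∃ f ∈ F.carrier, A = {s : S | f s = 0}}

/-- z-filters on `F`. -/
def IsZFilter (𝒜 : Set (Set S)) : Prop :=
  𝒜 ⊆ ZSet S F ∧ ∅ ∉ 𝒜 ∧ Set.univ ∈ 𝒜 ∧
    (∀ A ∈ 𝒜, ∀ B ∈ 𝒜, A ∩ B ∈ 𝒜) ∧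
    ∀ A ∈ 𝒜, ∀ B ∈ ZSet S F, A ⊆ B → B ∈ 𝒜

/-- `FS`: the collection of z-ultrafilters on `F`. -/
def zUltra : Set (Set (Set S)) :=
  {p | IsZFilter S F p ∧ ∀ q, IsZFilter S F q → p ⊆ q → q = p}

/-- `cl ε(A)` in `S^F`. -/
def epsCl (A : Set S) : Set (specF S F) := closure (epsF S F '' A)

/-- `⋂_{A ∈ p} cl ε(A)`; for `p ∈ FS` this is the singleton of the corresponding point of `S^F`. -/
def core (p : Set (Set S)) : Set (specF S F) := ⋂ A ∈ p, epsCl S F A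

/-- `p̃ = ⋂ [p]`, the intersection of the equivalence class of `p`. -/
def tilde (p : Set (Set S)) : Set (Set S) :=
  ⋂₀ {q | q ∈ zUltra S F ∧ core S F q = core S F p}

/-- pure z-filters. -/
def IsPure (𝒜 : Set (Set S)) : Prop :=
  IsZFilter S F 𝒜 ∧ ∀ p ∈ zUltra S F, 𝒜 ⊆ p → 𝒜 ⊆ tilde S F p

/-- `bar(𝒜) = {p̃ : 𝒜 ⊆ p}`, viewed as a subset of `S^F` via the identification of
`p̃` with the point `μ` such that `⋂_{A ∈ p} cl ε(A) = {μ}`. -/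
def barSet (𝒜 : Set (Set S)) : Set (specF S F) :=
  {μ | ∃ p ∈ zUltra S F, 𝒜 ⊆ p ∧ core S F p = {μ}}

/-- `𝒜° = {A ∈ 𝒜 : bar(𝒜) ⊆ int cl ε(A)}`. -/
def circA (𝒜 : Set (Set S)) : Set (Set S) :=
  {A ∈ 𝒜 | barSet S F 𝒜 ⊆ interior (epsCl S F A)}

/-- `⋂ J`, the intersection of the z-filters `p̃` corresponding to points of `J ⊆ S^F`. -/
def interOf (J : Set (specF S F)) : Set (Set S) :=
  ⋂₀ {C | ∃ p ∈ zUltra S F, ∃ μ ∈ J, core S F p = {μ} ∧ C = tilde S F p}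

/-- `⋂ [p̃]_R` for a relation `r` on `S^F`. -/
def classInter (r : specF S F → specF S F → Prop) (μ : specF S F) : Set (Set S) :=
  interOf S F {ν | r μ ν}

/-- `Ω_ℬ(A) = {x ∈ S : λ_x⁻¹(A) ∈ ℬ}`. -/
def OmegaZ (ℬ : Set (Set S)) (A : Set S) : Set S := {x : S | (fun t => x * t) ⁻¹' A ∈ ℬ}

/-- `𝒜 + ℬ`. -/
def zsum (𝒜 ℬ : Set (Set S)) : Set (Set S) :=
  {A ∈ ZSet S F | ∀ F' ∈ ZSet S F, OmegaZ S ℬ A ⊆ F' → F' ∈ 𝒜}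

/-- `𝒜 ⊙ ℬ = ⋂ bar(𝒜 + ℬ)`. -/
def odot (𝒜 ℬ : Set (Set S)) : Set (Set S) :=
  interOf S F (barSet S F (zsum S F 𝒜 ℬ))

/-- topological choice functions for a set `Γ` of z-filters. -/
def IsTCF (Γ : Set (Set (Set S))) (f : Set (Set S) → Set S) : Prop :=
  ∀ L ∈ Γ, f L ∈ L ∧ barSet S F L ⊆ interior (epsCl S F (f L))

/-- `A* = {𝓛 ∈ Γ : bar(𝓛) ∩ cl ε(A) ≠ ∅}`. -/
def starSet (Γ : Set (Set (Set S))) (A : Set S) : Set Γ :=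
  {L : Γ | (barSet S F (L : Set (Set S)) ∩ epsCl S F A).Nonempty}

/-- `A_* = {𝓛 ∈ Γ : bar(𝓛) ⊆ cl ε(A)}`. -/
def lowStar (Γ : Set (Set (Set S))) (A : Set S) : Set Γ :=
  {L : Γ | barSet S F (L : Set (Set S)) ⊆ epsCl S F A}

/-- The `τ*` quotient topology on `Γ`. -/
def tauStar (Γ : Set (Set (Set S))) : TopologicalSpace Γ :=
  TopologicalSpace.generateFrom {U | ∃ A ∈ ZSet S F, U = (starSet S F Γ A)ᶜ}

/-- The `τ_*` quotient topology on `Γ`. -/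
def tauLow (Γ : Set (Set (Set S))) : TopologicalSpace Γ :=
  TopologicalSpace.generateFrom {U | ∃ A ∈ ZSet S F, U = (lowStar S F Γ A)ᶜ}

/-- `Γ` is a quotient of `S^F`: conditions (a) and (b) of Theorem 3.9. -/
def IsQuotientOf (Γ : Set (Set (Set S))) : Prop :=
  (∀ L ∈ Γ, IsPure S F L) ∧
  (∀ f : Set (Set S) → Set S, IsTCF S F Γ f →
    ∃ 𝓕 : Finset (Set (Set S)), ↑𝓕 ⊆ Γ ∧
      (Set.univ : Set (specF S F)) = ⋃ L ∈ 𝓕, interior (epsCl S F (f L))) ∧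
  (∀ L ∈ Γ, ∀ K ∈ Γ, L ≠ K →
    ∃ A ∈ circA S F L, ∃ B ∈ circA S F K, ∀ C ∈ Γ,
      (∀ H ∈ ZSet S F, (interior (epsCl S F A))ᶜ ⊆ interior (epsCl S F H) → H ∈ C) ∨
      (∀ T ∈ ZSet S F, (interior (epsCl S F B))ᶜ ⊆ interior (epsCl S F T) → T ∈ C))

/-- The defining property of the map `γ : S^F → Γ` sending `p̃` to the unique member of `Γ`
contained in `p̃`. -/
def IsGamma (Γ : Set (Set (Set S))) (γ : specF S F → Γ) : Prop :=
  ∀ (μ : specF S F) (p : Set (Set S)), p ∈ zUltra S F → core S F p = {μ} →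
    (γ μ : Set (Set S)) ⊆ tilde S F p

/-- The defining property of the multiplication of `S^F`: `(μν)(f) = μ(T_ν f)` where
`(T_ν f)(s) = ν(L_s f)`. -/
def IsSpecMul (mul : specF S F → specF S F → specF S F) : Prop :=
  ∀ (μ ν : specF S F) (f : S →ᵇ ℂ) (hf : f ∈ F.carrier) (g : S →ᵇ ℂ) (hg : g ∈ F.carrier),
    (∀ s : S, g s = ν ⟨f.compContinuous (lamC S hl s), F.leftInvariant s f hf⟩) →
    mul μ ν ⟨f, hf⟩ = μ ⟨g, hg⟩

/-- `LMC(S)`, as a subset of `CB(S)`. -/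
def LMCset (hl : ∀ s : S, Continuous (fun t => s * t)) : Set (S →ᵇ ℂ) :=
  {f | ∀ μ : characterSpace ℂ (S →ᵇ ℂ),
    Continuous fun s : S => μ (f.compContinuous (lamC S hl s))}


/-! `S^F` is compact Hausdorff, `ε(S)` is dense in it, and by Gelfand duality every continuous
function `G` on `S^F` comes from `F`, so the sets `ε⁻¹{G ≤ c}` are zero sets. Urysohn's lemma then
gives `bar(⋂ J) = J` for every closed `J ⊆ S^F`. The classes of `R` are closed since `S^F/R` is
Hausdorff, hence `[μ] ↦ ⋂ [μ]_R` is a bijection onto `Γ`, under which `A*` corresponds to the image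
of `cl ε(A)` in `S^F/R`; that image is closed, so `φ` is continuous. Urysohn's lemma on `S^F/R`
shows that `τ*` is Hausdorff, and a continuous bijection from a compact space onto a Hausdorff
space is a homeomorphism. -/

section

variable {S : Type*} [TopologicalSpace S] [Semigroup S] {hl : ∀ s : S, Continuous (fun t => s * t)}

instance MAdmissible.completeSpace (F : MAdmissible S hl) : CompleteSpace F.carrier :=
  F.isClosed'.completeSpace_coe

instance MAdmissible.commCStarAlgebra (F : MAdmissible S hl) : CommCStarAlgebra F.carrier :=
  CommCStarAlgebra.mk

variable {F : MAdmissible S hl}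

theorem epsF_apply (s : S) (a : F.carrier) : epsF S F s a = (a : S →ᵇ ℂ) s := rfl

theorem exists_gelfandTransform_eq (G : C(specF S F, ℂ)) :
    ∃ a : F.carrier, ∀ x : specF S F, x a = G x :=
  ⟨(gelfandStarTransform F.carrier).symm G, fun x => by
    rw [← gelfandStarTransform_apply_apply, StarAlgEquiv.apply_symm_apply]⟩

theorem denseRange_epsF : DenseRange (epsF S F) := by
  rw [DenseRange, dense_iff_closure_eq, ← compl_empty_iff, ← not_nonempty_iff_eq_empty]
  rintro ⟨x, hx⟩
  obtain ⟨G, hG0, hG1, -⟩ := exists_continuous_zero_one_of_isClosed isClosed_closure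
    isClosed_singleton (disjoint_singleton_right.2 hx)
  obtain ⟨a, ha⟩ :=
    exists_gelfandTransform_eq ((ContinuousMap.mk _ Complex.continuous_ofReal).comp G)
  have ha0 : a = 0 := Subtype.ext <| BoundedContinuousFunction.ext fun s => by
    simpa [epsF_apply, hG0 (subset_closure (mem_range_self s))] using ha (epsF S F s)
  simpa [ha0, hG1 rfl] using ha x

theorem epsCl_univ : epsCl S F univ = univ := by
  rw [epsCl, image_univ, denseRange_epsF.closure_range]

theorem epsCl_union (A B : Set S) : epsCl S F (A ∪ B) = epsCl S F A ∪ epsCl S F B := by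
  rw [epsCl, image_union, closure_union, epsCl, epsCl]

theorem epsCl_preimage_subset {P : Set (specF S F)} (hP : IsClosed P) :
    epsCl S F (epsF S F ⁻¹' P) ⊆ P :=
  closure_minimal (image_preimage_subset _ _) hP

theorem univ_mem_ZSet : univ ∈ ZSet S F :=
  ⟨0, zero_mem _, by ext; simp⟩

theorem inter_mem_ZSet {A B : Set S} (hA : A ∈ ZSet S F) (hB : B ∈ ZSet S F) :
    A ∩ B ∈ ZSet S F := by
  obtain ⟨f, hf, rfl⟩ := hA
  obtain ⟨g, hg, rfl⟩ := hB
  refine ⟨star f * f + star g * g,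
    add_mem (mul_mem (star_mem hf) hf) (mul_mem (star_mem hg) hg), ?_⟩
  ext s
  have hsq : ∀ z : ℂ, star z * z = (Complex.normSq z : ℂ) := fun z => by
    rw [Complex.star_def, Complex.normSq_eq_conj_mul_self]
  simp only [mem_inter_iff, mem_ofPred_eq, BoundedContinuousFunction.coe_add,
    BoundedContinuousFunction.coe_mul, BoundedContinuousFunction.coe_star, Pi.add_apply,
    Pi.mul_apply, Pi.star_apply, hsq, ← Complex.ofReal_add, Complex.ofReal_eq_zero,
    add_eq_zero_iff_of_nonneg (Complex.normSq_nonneg _) (Complex.normSq_nonneg _),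
    Complex.normSq_eq_zero]

theorem preimage_le_mem_ZSet (G : C(specF S F, ℝ)) (c : ℝ) :
    epsF S F ⁻¹' {x | G x ≤ c} ∈ ZSet S F := by
  obtain ⟨a, ha⟩ := exists_gelfandTransform_eq
    ((ContinuousMap.mk _ Complex.continuous_ofReal).comp ((G - .const _ c) ⊔ 0))
  refine ⟨a, a.2, ?_⟩
  ext s
  simp [← epsF_apply, ha]

theorem preimage_ge_mem_ZSet (G : C(specF S F, ℝ)) (c : ℝ) :
    epsF S F ⁻¹' {x | c ≤ G x} ∈ ZSet S F := by
  simpa using preimage_le_mem_ZSet (-G) (-c)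

theorem IsZFilter.nonempty_of_mem {p : Set (Set S)} (hp : IsZFilter S F p) {A : Set S}
    (hA : A ∈ p) : A.Nonempty :=
  nonempty_iff_ne_empty.2 fun h => hp.2.1 (h ▸ hA)

theorem IsZFilter.exists_zUltra_superset {p : Set (Set S)} (hp : IsZFilter S F p) :
    ∃ q ∈ zUltra S F, p ⊆ q := by
  have hchain : ∀ c ⊆ {q | IsZFilter S F q}, IsChain (· ⊆ ·) c → c.Nonempty →
      ∃ ub ∈ {q | IsZFilter S F q}, ∀ q ∈ c, q ⊆ ub := by
    rintro c hc hc_chain ⟨q₀, hq₀⟩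
    refine ⟨⋃₀ c, ⟨?_, ?_, ⟨q₀, hq₀, (hc hq₀).2.2.1⟩, ?_, ?_⟩, fun q hq => subset_sUnion_of_mem hq⟩
    · rintro A ⟨q, hq, hA⟩
      exact (hc hq).1 hA
    · rintro ⟨q, hq, hA⟩
      exact (hc hq).2.1 hA
    · rintro A ⟨q₁, hq₁, hA⟩ B ⟨q₂, hq₂, hB⟩
      rcases hc_chain.total hq₁ hq₂ with h | h
      · exact ⟨q₂, hq₂, (hc hq₂).2.2.2.1 A (h hA) B hB⟩
      · exact ⟨q₁, hq₁, (hc hq₁).2.2.2.1 A hA B (h hB)⟩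
    · rintro A ⟨q, hq, hA⟩ B hB hAB
      exact ⟨q, hq, (hc hq).2.2.2.2 A hA B hB hAB⟩
  obtain ⟨m, hpm, hmax⟩ := zorn_subset_nonempty {q | IsZFilter S F q} hchain p hp
  exact ⟨m, ⟨hmax.prop, fun q hq hmq => subset_antisymm (hmax.2 hq hmq) hmq⟩, hpm⟩

theorem mem_zUltra_of_forall_inter_nonempty {p : Set (Set S)} (hp : p ∈ zUltra S F)
    {A : Set S} (hA : A ∈ ZSet S F) (h : ∀ Z ∈ p, (A ∩ Z).Nonempty) : A ∈ p := by
  obtain ⟨⟨hpZ, -, hp_univ, hp_inter, -⟩, hp_max⟩ := hp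
  let q : Set (Set S) := {Z | Z ∈ ZSet S F ∧ ∃ W ∈ p, A ∩ W ⊆ Z}
  have hq : IsZFilter S F q := by
    refine ⟨fun Z hZ => hZ.1, ?_, ⟨univ_mem_ZSet, univ, hp_univ, subset_univ _⟩, ?_, ?_⟩
    · rintro ⟨-, W, hW, hsub⟩
      exact (h W hW).ne_empty (subset_empty_iff.1 hsub)
    · rintro Z₁ ⟨hZ₁, W₁, hW₁, h₁⟩ Z₂ ⟨hZ₂, W₂, hW₂, h₂⟩
      exact ⟨inter_mem_ZSet hZ₁ hZ₂, W₁ ∩ W₂, hp_inter W₁ hW₁ W₂ hW₂,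
        subset_inter (fun x hx => h₁ ⟨hx.1, hx.2.1⟩) (fun x hx => h₂ ⟨hx.1, hx.2.2⟩)⟩
    · rintro Z ⟨-, W, hW, hsub⟩ B hB hZB
      exact ⟨hB, W, hW, hsub.trans hZB⟩
  rw [← hp_max q hq fun Z hZ => ⟨hpZ hZ, Z, hZ, inter_subset_right⟩]
  exact ⟨hA, univ, hp_univ, inter_subset_left⟩

theorem isZFilter_ZSet_inter_filter (f : Filter S) [f.NeBot] :
    IsZFilter S F {Z | Z ∈ ZSet S F ∧ Z ∈ f} :=
  ⟨fun _ hZ => hZ.1, fun h => f.empty_notMem h.2, ⟨univ_mem_ZSet, Filter.univ_mem⟩,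
    fun _ hA _ hB => ⟨inter_mem_ZSet hA.1 hB.1, Filter.inter_mem hA.2 hB.2⟩,
    fun _ hA _ hB hAB => ⟨hB, Filter.mem_of_superset hA.2 hAB⟩⟩

theorem mem_epsCl_of_core_eq {p : Set (Set S)} {ν : specF S F} (h : core S F p = {ν})
    {Z : Set S} (hZ : Z ∈ p) : ν ∈ epsCl S F Z :=
  mem_iInter₂.1 (h ▸ mem_singleton ν : ν ∈ core S F p) Z hZ

theorem exists_zUltra_core_eq_singleton (ν : specF S F) :
    ∃ p ∈ zUltra S F, core S F p = {ν} := by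
  have : (Filter.comap (epsF S F) (𝓝 ν)).NeBot := Filter.comap_neBot fun t ht => by
    obtain ⟨_, hxt, s, rfl⟩ := mem_closure_iff_nhds.1 (denseRange_epsF ν) t ht
    exact ⟨s, hxt⟩
  obtain ⟨p, hp, hp₀⟩ :=
    (isZFilter_ZSet_inter_filter (F := F) (Filter.comap (epsF S F) (𝓝 ν))).exists_zUltra_superset
  have hsep : ∀ C : Set (specF S F), IsClosed C → ν ∉ C → ∃ W ∈ p, Disjoint (epsCl S F W) C := by
    intro C hC hνC
    obtain ⟨G, hGν, hGC, -⟩ := exists_continuous_zero_one_of_isClosed isClosed_singleton hC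
      (disjoint_singleton_left.2 hνC)
    have hν : {x | G x ≤ 1 / 2} ∈ 𝓝 ν :=
      G.continuous.continuousAt.preimage_mem_nhds (Iic_mem_nhds (by simp [hGν rfl]))
    refine ⟨_, hp₀ ⟨preimage_le_mem_ZSet G (1 / 2), Filter.preimage_mem_comap hν⟩,
      disjoint_of_subset_left (epsCl_preimage_subset (isClosed_le G.continuous continuous_const))
        (disjoint_left.2 fun x hx hxC => ?_)⟩
    norm_num [hGC hxC] at hx
  refine ⟨p, hp, eq_singleton_iff_unique_mem.2 ⟨mem_iInter₂.2 fun Z hZ => ?_, fun κ hκ => ?_⟩⟩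
  · by_contra hνZ
    obtain ⟨W, hW, hWZ⟩ := hsep _ isClosed_closure hνZ
    obtain ⟨s, hsW, hsZ⟩ := hp.1.nonempty_of_mem (hp.1.2.2.2.1 W hW Z hZ)
    exact disjoint_left.1 hWZ (subset_closure (mem_image_of_mem _ hsW))
      (subset_closure (mem_image_of_mem _ hsZ))
  · by_contra hκν
    obtain ⟨W, hW, hWκ⟩ := hsep {κ} isClosed_singleton (Ne.symm hκν)
    exact disjoint_singleton_right.1 hWκ (mem_iInter₂.1 hκ W hW)

theorem interOf_subset {J : Set (specF S F)} {ν : specF S F} (hν : ν ∈ J) {p : Set (Set S)}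
    (hp : p ∈ zUltra S F) (hcore : core S F p = {ν}) : interOf S F J ⊆ p :=
  fun _ hA => hA (tilde S F p) ⟨p, hp, ν, hν, hcore, rfl⟩ p ⟨hp, rfl⟩

theorem preimage_le_mem_interOf {J : Set (specF S F)} (G : C(specF S F, ℝ))
    (hG : ∀ ν ∈ J, G ν = 0) {c : ℝ} (hc : 0 < c) :
    epsF S F ⁻¹' {x | G x ≤ c} ∈ interOf S F J := by
  rintro _ ⟨p, -, ν, hν, hcore, rfl⟩ q ⟨hq, hqp⟩
  refine mem_zUltra_of_forall_inter_nonempty hq (preimage_le_mem_ZSet G c) fun Z hZ => ?_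
  by_contra hWZ
  have hZc : Z ⊆ epsF S F ⁻¹' {x | c ≤ G x} := fun s hs =>
    show c ≤ G (epsF S F s) from le_of_not_ge fun h => hWZ ⟨s, h, hs⟩
  have hcν : c ≤ G ν := epsCl_preimage_subset (isClosed_le continuous_const G.continuous)
    (closure_mono (image_mono hZc) (mem_epsCl_of_core_eq (hqp.trans hcore) hZ))
  linarith [hG ν hν]

theorem barSet_interOf {J : Set (specF S F)} (hJ : IsClosed J) :
    barSet S F (interOf S F J) = J := by
  refine Subset.antisymm (fun κ ⟨p, hp, hJp, hcore⟩ => ?_) fun ν hν => ?_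
  · by_contra hκ
    obtain ⟨G, hGJ, hGκ, -⟩ := exists_continuous_zero_one_of_isClosed hJ isClosed_singleton
      (disjoint_singleton_right.2 hκ)
    have hκ_le : G κ ≤ 1 / 2 := epsCl_preimage_subset (isClosed_le G.continuous continuous_const)
      (mem_epsCl_of_core_eq hcore (hJp (preimage_le_mem_interOf G (fun _ h => hGJ h) one_half_pos)))
    norm_num [hGκ rfl] at hκ_le
  · obtain ⟨p, hp, hcore⟩ := exists_zUltra_core_eq_singleton ν
    exact ⟨p, hp, interOf_subset hν hp hcore, hcore⟩

theorem isOpen_compl_starSet (Γ : Set (Set (Set S))) {A : Set S} (hA : A ∈ ZSet S F) :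
    IsOpen[tauStar S F Γ] (starSet S F Γ A)ᶜ :=
  TopologicalSpace.isOpen_generateFrom_of_mem ⟨A, hA, rfl⟩

variable (st : Setoid (specF S F))

theorem classInter_eq_of_rel {μ ν : specF S F} (h : st.r μ ν) :
    classInter S F st.r μ = classInter S F st.r ν :=
  congrArg (interOf S F) <| ext fun _ => ⟨st.iseqv.trans (st.iseqv.symm h), st.iseqv.trans h⟩

theorem barSet_classInter [T2Space (Quotient st)] (μ : specF S F) :
    barSet S F (classInter S F st.r μ) = {ν | st.r μ ν} := by
  have hclass : {ν | st.r μ ν} = Quotient.mk st ⁻¹' {Quotient.mk st μ} :=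
    ext fun _ => (eq_comm.trans Quotient.eq).symm
  exact barSet_interOf (hclass ▸ isClosed_singleton.preimage continuous_quotient_mk')

theorem classInter_eq_classInter_iff [T2Space (Quotient st)] {μ ν : specF S F} :
    classInter S F st.r μ = classInter S F st.r ν ↔ st.r μ ν := by
  refine ⟨fun h => ?_, classInter_eq_of_rel st⟩
  have hν : ν ∈ barSet S F (classInter S F st.r ν) := by
    rw [barSet_classInter]
    exact st.iseqv.refl ν
  rwa [← h, barSet_classInter] at hν

def classInterQuot : Quotient st → range (classInter S F st.r) :=
  Quotient.lift (fun μ => ⟨classInter S F st.r μ, mem_range_self μ⟩) fun _ _ h =>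
    Subtype.ext (classInter_eq_of_rel st h)

theorem classInterQuot_surjective : Function.Surjective (classInterQuot st) := by
  rintro ⟨_, μ, rfl⟩
  exact ⟨Quotient.mk st μ, rfl⟩

theorem classInterQuot_injective [T2Space (Quotient st)] :
    Function.Injective (classInterQuot st) := by
  rintro ⟨μ⟩ ⟨ν⟩ h
  exact Quotient.sound ((classInter_eq_classInter_iff st).1 (congrArg Subtype.val h))

theorem preimage_classInterQuot_starSet [T2Space (Quotient st)] (A : Set S) :
    classInterQuot st ⁻¹' starSet S F _ A = Quotient.mk st '' epsCl S F A := by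
  ext ⟨μ⟩
  change (barSet S F (classInter S F st.r μ) ∩ epsCl S F A).Nonempty ↔ _
  rw [barSet_classInter]
  constructor
  · rintro ⟨ν, hμν, hν⟩
    exact ⟨ν, hν, Quotient.sound (st.iseqv.symm hμν)⟩
  · rintro ⟨ν, hν, h⟩
    exact ⟨ν, st.iseqv.symm (Quotient.exact h), hν⟩

theorem continuous_classInterQuot [T2Space (Quotient st)] :
    Continuous[_, tauStar S F _] (classInterQuot st) := by
  rw [tauStar, continuous_generateFrom_iff]
  rintro _ ⟨A, -, rfl⟩
  rw [preimage_compl, preimage_classInterQuot_starSet, isOpen_compl_iff]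
  exact continuous_quotient_mk'.isClosedMap _ isClosed_closure

theorem t2Space_tauStar [T2Space (Quotient st)] :
    @T2Space _ (tauStar S F (range (classInter S F st.r))) := by
  let _ : TopologicalSpace (range (classInter S F st.r)) := tauStar S F _
  refine ⟨fun L K hLK => ?_⟩
  obtain ⟨x, rfl⟩ := classInterQuot_surjective st L
  obtain ⟨y, rfl⟩ := classInterQuot_surjective st K
  obtain ⟨g, hgx, hgy, -⟩ := exists_continuous_zero_one_of_isClosed (isClosed_singleton (x := x))
    (isClosed_singleton (x := y)) (disjoint_singleton.2 (ne_of_apply_ne _ hLK))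
  let G : C(specF S F, ℝ) := g.comp ⟨Quotient.mk st, continuous_quotient_mk'⟩
  refine ⟨_, _, isOpen_compl_starSet _ (preimage_ge_mem_ZSet G (1 / 2)),
    isOpen_compl_starSet _ (preimage_le_mem_ZSet G (1 / 2)), ?_, ?_, ?_⟩
  · rw [mem_compl_iff, ← mem_preimage, preimage_classInterQuot_starSet]
    rintro ⟨κ, hκ, rfl⟩
    have := epsCl_preimage_subset (isClosed_le continuous_const G.continuous) hκ
    norm_num [G, hgx rfl] at this
  · rw [mem_compl_iff, ← mem_preimage, preimage_classInterQuot_starSet]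
    rintro ⟨κ, hκ, rfl⟩
    have := epsCl_preimage_subset (isClosed_le G.continuous continuous_const) hκ
    norm_num [G, hgy rfl] at this
  · rw [disjoint_compl_left_iff_subset]
    intro M hM
    obtain ⟨_, rfl⟩ := classInterQuot_surjective st M
    obtain ⟨μ, rfl⟩ := Quotient.mk_surjective (s := st) ‹_›
    rw [mem_compl_iff, ← mem_preimage, preimage_classInterQuot_starSet] at hM
    rw [← mem_preimage, preimage_classInterQuot_starSet]
    have hμ :
        μ ∈ epsCl S F (epsF S F ⁻¹' {x | 1 / 2 ≤ G x} ∪ epsF S F ⁻¹' {x | G x ≤ 1 / 2}) := by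
      rw [← preimage_union, ← ofPred_or]
      simp only [le_total, ofPred_true, preimage_univ, epsCl_univ, mem_univ]
    rw [epsCl_union] at hμ
    exact ⟨μ, hμ.resolve_right fun h => hM ⟨μ, h, rfl⟩, rfl⟩

theorem isHomeomorph_classInterQuot [T2Space (Quotient st)] :
    @IsHomeomorph _ _ _ (tauStar S F _) (classInterQuot st) :=
  (@isHomeomorph_iff_continuous_bijective _ _ _ (tauStar S F _) _ _ (t2Space_tauStar st)).2
    ⟨continuous_classInterQuot st, classInterQuot_injective st, classInterQuot_surjective st⟩

end

theorem statement4
    (st : Setoid (specF S F)) (hT2 : T2Space (Quotient st))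
    (Γ : Set (Set (Set S))) (hΓ : Γ = Set.range (classInter S F st.r)) :
    (∀ φ : Quotient st → Γ,
        (∀ μ : specF S F, (φ (Quotient.mk st μ) : Set (Set S)) = classInter S F st.r μ) →
        @IsHomeomorph (Quotient st) Γ inferInstance (tauStar S F Γ) φ) ∧
      Nonempty (@Homeomorph (Quotient st) Γ inferInstance (tauStar S F Γ)) := by
  subst hΓ
  have hφ₀ := isHomeomorph_classInterQuot st
  refine ⟨fun φ hφ => ?_, ⟨@IsHomeomorph.homeomorph _ _ _ (tauStar S F _) _ hφ₀⟩⟩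
  convert hφ₀
  exact funext <| Quotient.ind fun μ => Subtype.ext (hφ μ)

end
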